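/- For a > 0, c > b > 0, p, q ≥ 0, and real z with |z| < 1, the (p,q)-extended Gauss hypergeometric function satisfies |F_{p,q}(a, b; c; z)| ≤ exp(-(√p + √q)²) · ₂F₁(a, b; c; |z|). -/

import Mathlib

open Real MeasureTheory

/-- The (p,q)-extended Beta function. -/
noncomputable def pqBeta (x y p q : ℝ) : ℝ :=
  ∫ t in (0 : ℝ)..1, t ^ (x - 1) * (1 - t) ^ (y - 1) * Real.exp (-p / t - q / (1 - t))

/-- The (p,q)-extended Gauss hypergeometric function, series definition. -/
noncomputable def pqGauss (a b c z p q : ℝ) : ℝ :=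
  ∑' n : ℕ, (ascPochhammer ℝ n).eval a *
    (pqBeta (b + n) (c - b) p q / pqBeta b (c - b) 0 0) * z ^ n / n.factorial

/-- The Gaussian hypergeometric series. -/
noncomputable def twoF1 (a b c z : ℝ) : ℝ :=
  ∑' n : ℕ, (ascPochhammer ℝ n).eval a * (ascPochhammer ℝ n).eval b /
    (ascPochhammer ℝ n).eval c * z ^ n / n.factorial

/-
On `(0, 1)` the Cauchy–Schwarz inequality gives `p / t + q / (1 - t) ≥ (√p + √q)²`, so the
`(p,q)`-Beta integral is at most `exp (-(√p + √q)²)` times the classical one. Together with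
`B(b + n, c - b) / B(b, c - b) = (b)ₙ / (c)ₙ`, this bounds the `n`-th term of
`F_{p,q}(a, b; c; z)` in absolute value by `exp (-(√p + √q)²)` times the `n`-th term of
`₂F₁(a, b; c; |z|)`, a series that converges for `|z| < 1`.
-/

lemma cpow_mul_one_sub_cpow_eq_ofReal {x y t : ℝ} (ht : t ∈ Set.Icc (0 : ℝ) 1) :
    (t : ℂ) ^ ((x : ℂ) - 1) * (1 - (t : ℂ)) ^ ((y : ℂ) - 1) =
      ↑(t ^ (x - 1) * (1 - t) ^ (y - 1)) := by
  have h1 : 0 ≤ 1 - t := sub_nonneg.2 ht.2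
  push_cast [Complex.ofReal_cpow ht.1, Complex.ofReal_cpow h1]
  rfl

lemma intervalIntegrable_betaIntegrand {x y : ℝ} (hx : 0 < x) (hy : 0 < y) :
    IntervalIntegrable (fun t : ℝ => t ^ (x - 1) * (1 - t) ^ (y - 1)) volume 0 1 := by
  have h := (Complex.betaIntegral_convergent (u := x) (v := y) (by simpa) (by simpa)).norm
  refine (intervalIntegrable_congr fun t ht => ?_).1 h
  rw [Set.uIoc_of_le zero_le_one] at ht
  rw [cpow_mul_one_sub_cpow_eq_ofReal (Set.Ioc_subset_Icc_self ht), Complex.norm_real,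
    Real.norm_of_nonneg]
  have : 0 ≤ 1 - t := sub_nonneg.2 ht.2
  have := ht.1.le
  positivity

lemma pqBeta_zero_zero {x y : ℝ} (hx : 0 < x) (hy : 0 < y) :
    pqBeta x y 0 0 = ProbabilityTheory.beta x y := by
  rw [ProbabilityTheory.beta_eq_betaIntegralReal x y hx hy, Complex.betaIntegral,
    intervalIntegral.integral_congr (fun t ht => cpow_mul_one_sub_cpow_eq_ofReal (x := x) (y := y)
      (by rwa [Set.uIcc_of_le zero_le_one] at ht)), intervalIntegral.integral_ofReal,
    Complex.ofReal_re]
  simp [pqBeta]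

lemma Real.Gamma_add_nat {x : ℝ} (hx : 0 < x) (n : ℕ) :
    Real.Gamma (x + n) = (ascPochhammer ℝ n).eval x * Real.Gamma x := by
  induction n with
  | zero => simp
  | succ n ih =>
    rw [Nat.cast_succ, ← add_assoc, Real.Gamma_add_one (by positivity), ih,
      ascPochhammer_succ_eval]
    ring

lemma ProbabilityTheory.beta_add_nat_div_beta {x y : ℝ} (hx : 0 < x) (hy : 0 < y) (n : ℕ) :
    ProbabilityTheory.beta (x + n) y / ProbabilityTheory.beta x y =
      (ascPochhammer ℝ n).eval x / (ascPochhammer ℝ n).eval (x + y) := by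
  have hxy : 0 < x + y := add_pos hx hy
  have := Real.Gamma_pos_of_pos hx
  have := Real.Gamma_pos_of_pos hy
  have := Real.Gamma_pos_of_pos hxy
  have := ascPochhammer_pos n (x + y) hxy
  rw [ProbabilityTheory.beta, ProbabilityTheory.beta, add_right_comm, Real.Gamma_add_nat hx,
    Real.Gamma_add_nat hxy]
  field_simp

lemma add_sq_le_sq_div_add_sq_div {u v t : ℝ} (ht₀ : 0 < t) (ht₁ : t < 1) :
    (u + v) ^ 2 ≤ u ^ 2 / t + v ^ 2 / (1 - t) := by
  have : 0 < 1 - t := sub_pos.2 ht₁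
  rw [div_add_div _ _ ht₀.ne' this.ne', le_div_iff₀ (by positivity)]
  nlinarith [sq_nonneg (u * (1 - t) - v * t)]

lemma exp_neg_div_sub_div_le {p q t : ℝ} (hp : 0 ≤ p) (hq : 0 ≤ q) (ht₀ : 0 < t)
    (ht₁ : t < 1) :
    Real.exp (-p / t - q / (1 - t)) ≤ Real.exp (-(Real.sqrt p + Real.sqrt q) ^ 2) := by
  have := add_sq_le_sq_div_add_sq_div (u := √p) (v := √q) ht₀ ht₁
  rw [Real.sq_sqrt hp, Real.sq_sqrt hq] at this
  rw [Real.exp_le_exp, neg_div]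
  linarith

lemma intervalIntegrable_pqBetaIntegrand {x y p q : ℝ} (hx : 0 < x) (hy : 0 < y) (hp : 0 ≤ p)
    (hq : 0 ≤ q) : IntervalIntegrable
      (fun t : ℝ => t ^ (x - 1) * (1 - t) ^ (y - 1) * Real.exp (-p / t - q / (1 - t)))
      volume 0 1 := by
  refine (intervalIntegrable_betaIntegrand hx hy).mono_fun' (by fun_prop) ?_
  refine ae_restrict_of_forall_mem measurableSet_uIoc fun t ht => ?_
  rw [Set.uIoc_of_le zero_le_one] at ht
  have h₀ : 0 ≤ t := ht.1.le
  have h₁ : 0 ≤ 1 - t := sub_nonneg.2 ht.2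
  have hexp : Real.exp (-p / t - q / (1 - t)) ≤ 1 := by
    rw [Real.exp_le_one_iff, neg_div]
    linarith [div_nonneg hp h₀, div_nonneg hq h₁]
  dsimp only
  rw [Real.norm_of_nonneg (by positivity)]
  exact mul_le_of_le_one_right (by positivity) hexp

lemma pqBeta_nonneg (x y p q : ℝ) : 0 ≤ pqBeta x y p q := by
  refine intervalIntegral.integral_nonneg zero_le_one fun t ht => ?_
  have := ht.1
  have : 0 ≤ 1 - t := sub_nonneg.2 ht.2
  positivity

lemma pqBeta_le_exp_mul {x y p q : ℝ} (hx : 0 < x) (hy : 0 < y) (hp : 0 ≤ p) (hq : 0 ≤ q) :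
    pqBeta x y p q ≤ Real.exp (-(Real.sqrt p + Real.sqrt q) ^ 2) * pqBeta x y 0 0 := by
  have hbeta : pqBeta x y 0 0 = ∫ t in (0 : ℝ)..1, t ^ (x - 1) * (1 - t) ^ (y - 1) := by
    simp [pqBeta]
  rw [hbeta, ← intervalIntegral.integral_const_mul]
  refine intervalIntegral.integral_mono_on_of_le_Ioo zero_le_one
    (intervalIntegrable_pqBetaIntegrand hx hy hp hq)
    ((intervalIntegrable_betaIntegrand hx hy).const_mul _) fun t ht => ?_
  have : 0 ≤ 1 - t := sub_nonneg.2 ht.2.le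
  have := ht.1.le
  rw [mul_comm (Real.exp _)]
  exact mul_le_mul_of_nonneg_left (exp_neg_div_sub_div_le hp hq ht.1 ht.2) (by positivity)

lemma abs_pqBeta_add_nat_div_le {b y p q : ℝ} (hb : 0 < b) (hy : 0 < y) (hp : 0 ≤ p)
    (hq : 0 ≤ q) (n : ℕ) : |pqBeta (b + n) y p q / pqBeta b y 0 0| ≤
      Real.exp (-(Real.sqrt p + Real.sqrt q) ^ 2) *
        ((ascPochhammer ℝ n).eval b / (ascPochhammer ℝ n).eval (b + y)) := by
  have hbn : 0 < b + n := by positivity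
  rw [abs_of_nonneg (div_nonneg (pqBeta_nonneg _ _ _ _) (pqBeta_nonneg _ _ _ _))]
  calc pqBeta (b + n) y p q / pqBeta b y 0 0
      ≤ Real.exp (-(Real.sqrt p + Real.sqrt q) ^ 2) * pqBeta (b + n) y 0 0 / pqBeta b y 0 0 :=
        div_le_div_of_nonneg_right (pqBeta_le_exp_mul hbn hy hp hq) (pqBeta_nonneg _ _ _ _)
    _ = _ := by
      rw [mul_div_assoc, pqBeta_zero_zero hbn hy, pqBeta_zero_zero hb hy,
        ProbabilityTheory.beta_add_nat_div_beta hb hy]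

lemma summable_twoF1_term {a b c x : ℝ}
    (habc : ∀ k : ℕ, (k : ℝ) ≠ -a ∧ (k : ℝ) ≠ -b ∧ (k : ℝ) ≠ -c)
    (hx : |x| < 1) : Summable fun n : ℕ => (ascPochhammer ℝ n).eval a *
      (ascPochhammer ℝ n).eval b / (ascPochhammer ℝ n).eval c * x ^ n / n.factorial := by
  have hmem : x ∈ Metric.eball (0 : ℝ) (ordinaryHypergeometricSeries ℝ a b c).radius := by
    rw [ordinaryHypergeometricSeries_radius_eq_one ℝ a b c habc, Metric.mem_eball,
      edist_zero_right, ← ofReal_norm, ENNReal.ofReal_lt_one]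
    exact hx
  refine ((ordinaryHypergeometricSeries ℝ a b c).summable_norm_apply hmem).of_norm.congr
    fun n => ?_
  rw [ordinaryHypergeometricSeries_apply_eq, smul_eq_mul]
  field_simp

theorem pqGauss_abs_le (a b c z p q : ℝ) (ha : 0 < a) (hb : 0 < b) (hcb : b < c)
    (hp : 0 ≤ p) (hq : 0 ≤ q) (hz : |z| < 1) :
    |pqGauss a b c z p q| ≤
      Real.exp (-(Real.sqrt p + Real.sqrt q) ^ 2) * twoF1 a b c |z| := by
  have hne : ∀ {s : ℝ}, 0 < s → ∀ k : ℕ, (k : ℝ) ≠ -s := fun hs k =>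
    ((neg_neg_of_pos hs).trans_le k.cast_nonneg).ne'
  have hsum := summable_twoF1_term (a := a) (b := b) (c := c)
    (fun k => ⟨hne ha k, hne hb k, hne (hb.trans hcb) k⟩) (by rwa [abs_abs])
  refine tsum_of_norm_bounded (E := ℝ) (hsum.hasSum.mul_left _) fun n => ?_
  have hratio := abs_pqBeta_add_nat_div_le hb (sub_pos.2 hcb) hp hq n
  rw [add_sub_cancel] at hratio
  rw [Real.norm_eq_abs, abs_div, abs_mul, abs_mul, abs_pow, Nat.abs_cast,
    abs_of_pos (ascPochhammer_pos n a ha)]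
  calc _ ≤ (ascPochhammer ℝ n).eval a * (Real.exp (-(Real.sqrt p + Real.sqrt q) ^ 2) *
        ((ascPochhammer ℝ n).eval b / (ascPochhammer ℝ n).eval c)) * |z| ^ n / n.factorial := by
        gcongr
        exact (ascPochhammer_pos n a ha).le
    _ = _ := by ring
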